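/- Let m ≥ 1, let 0 < q₁, …, q_m, p ≤ ∞ and 1 ≤ r ≤ ∞. Let T : L^{q₁}(μ₁) × ⋯ × L^{q_m}(μ_m) → L^p(ν) be an m-linear operator over σ-finite measure spaces which is positive (if fⁱ ≥ 0 μᵢ-a.e. for every i, then T(f¹,…,f^m) ≥ 0 ν-a.e.) and bounded with norm at most M, i.e., ‖T(f¹,…,f^m)‖_{L^p(ν)} ≤ M ∏_{i=1}^m ‖fⁱ‖_{L^{qᵢ}(μᵢ)} for all fⁱ. Then for all finite families {f^i_{kᵢ}}_{kᵢ=1}^{nᵢ} ⊂ L^{qᵢ}(μᵢ): ‖(∑_{k₁,…,k_m} |T(f^1_{k₁},…,f^m_{k_m})|^r)^{1/r}‖_{L^p(ν)} ≤ M · ∏_{i=1}^m ‖(∑_{kᵢ=1}^{nᵢ} |f^i_{kᵢ}|^r)^{1/r}‖_{L^{qᵢ}(μᵢ)} (with suprema over the indices replacing the ℓ^r sums when r = ∞). -/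

import Mathlib

/-
Positivity and multilinearity give `|T f| ≤ T g` whenever `|f j| ≤ g j` in every slot. The
`ℓ^r` norm of a finite vector is the supremum of `|∑ c_k v_k|` over countably many dual vectors
`c`; for each of them `∑ c_k T(…, a_k, …) = T(…, ∑ c_k a_k, …)` and `|∑ c_k a_k| ≤ ‖a‖_r`, so
the `ℓ^r` norm over the index of one slot is dominated by `T` with `‖a‖_r` in that slot.
Writing the `ℓ^r` norm over a product of index sets as an iterated one frees the slots one at a
time, and the boundedness of `T` applied to `(‖f¹‖_r, …, ‖f^m‖_r)` finishes the proof.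
-/

open MeasureTheory ENNReal Function

noncomputable def lrNorm {ι : Type} [Fintype ι] (r : ℝ≥0∞) (a : ι → ℝ) : ℝ :=
  if r = ∞ then ⨆ k, |a k| else (∑ k, |a k| ^ r.toReal) ^ (1 / r.toReal)

/-- A map `T` on (representatives of) functions which is, in the almost-everywhere sense,
an `m`-linear operator `L^{q₁}(μ₁) × ⋯ × L^{q_m}(μ_m) → L^p(ν)` bounded with norm at most `M`. -/
structure IsBddMultilinear {m : ℕ} {Ω : Fin m → Type} [∀ i, MeasurableSpace (Ω i)]
    (μ : ∀ i, Measure (Ω i)) {Ω' : Type} [MeasurableSpace Ω'] (ν : Measure Ω')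
    (q : Fin m → ℝ≥0∞) (p : ℝ≥0∞)
    (T : (∀ i, Ω i → ℝ) → Ω' → ℝ) (M : ℝ) : Prop where
  congr : ∀ f g : ∀ i, Ω i → ℝ, (∀ j, MemLp (f j) (q j) (μ j)) →
      (∀ j, MemLp (g j) (q j) (μ j)) → (∀ j, f j =ᵐ[μ j] g j) → T f =ᵐ[ν] T g
  multilinear : ∀ (f : ∀ i, Ω i → ℝ), (∀ j, MemLp (f j) (q j) (μ j)) →
      ∀ (i : Fin m) (c : ℝ) (g h : Ω i → ℝ), MemLp g (q i) (μ i) → MemLp h (q i) (μ i) →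
        T (update f i fun x => c * g x + h x) =ᵐ[ν]
          fun ω => c * T (update f i g) ω + T (update f i h) ω
  memℒp : ∀ f : ∀ i, Ω i → ℝ, (∀ j, MemLp (f j) (q j) (μ j)) → MemLp (T f) p ν
  bound : ∀ f : ∀ i, Ω i → ℝ, (∀ j, MemLp (f j) (q j) (μ j)) →
      eLpNorm (T f) p ν ≤ ENNReal.ofReal M * ∏ i, eLpNorm (f i) (q i) (μ i)

/-- The Marcinkiewicz–Zygmund inequality at exponent `r` with constant `K` for the operator `T`
and the finite families `f i (kᵢ)`, `kᵢ = 1, …, n i`. -/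
noncomputable def MZineq {m : ℕ} {Ω : Fin m → Type} [∀ i, MeasurableSpace (Ω i)]
    (μ : ∀ i, Measure (Ω i)) {Ω' : Type} [MeasurableSpace Ω'] (ν : Measure Ω')
    (q : Fin m → ℝ≥0∞) (p r : ℝ≥0∞)
    (T : (∀ i, Ω i → ℝ) → Ω' → ℝ) (K : ℝ)
    (n : Fin m → ℕ) (f : ∀ i, Fin (n i) → Ω i → ℝ) : Prop :=
  eLpNorm (fun ω => lrNorm r fun k : ∀ i, Fin (n i) => T (fun i => f i (k i)) ω) p ν
    ≤ ENNReal.ofReal K *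
      ∏ i, eLpNorm (fun x => lrNorm r fun kᵢ : Fin (n i) => f i kᵢ x) (q i) (μ i)

/-- The triple `(q, p, r)` satisfies the (m-linear) Marcinkiewicz–Zygmund inequality
with constant `C`: for all σ-finite measure spaces, every bounded multilinear operator with
norm at most `M`, and all finite families in each slot, the MZ inequality holds with `C * M`. -/
def MZprop (m : ℕ) (q : Fin m → ℝ≥0∞) (p r : ℝ≥0∞) (C : ℝ) : Prop :=
  ∀ (Ω : Fin m → Type) [∀ i, MeasurableSpace (Ω i)] (μ : ∀ i, Measure (Ω i))
    [∀ i, SigmaFinite (μ i)]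
    (Ω' : Type) [MeasurableSpace Ω'] (ν : Measure Ω') [SigmaFinite ν]
    (T : (∀ i, Ω i → ℝ) → Ω' → ℝ) (M : ℝ), 0 ≤ M →
    IsBddMultilinear μ ν q p T M →
    ∀ (n : Fin m → ℕ) (f : ∀ i, Fin (n i) → Ω i → ℝ),
      (∀ i kᵢ, MemLp (f i kᵢ) (q i) (μ i)) →
      MZineq μ ν q p r T (C * M) n f

section lrNorm

variable {ι κ : Type} [Fintype ι] [Fintype κ] {r : ℝ≥0∞}

lemma lrNorm_eq_norm_toLp (hr : r ≠ 0) (a : ι → ℝ) : lrNorm r a = ‖WithLp.toLp r a‖ := by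
  by_cases h : r = ∞
  · subst h; simp [lrNorm, PiLp.norm_eq_ciSup]
  · rw [lrNorm, if_neg h, PiLp.norm_eq_sum (ENNReal.toReal_pos hr h)]
    simp

lemma lrNorm_nonneg (a : ι → ℝ) : 0 ≤ lrNorm r a := by
  unfold lrNorm
  split
  · exact Real.iSup_nonneg fun k => abs_nonneg _
  · positivity

lemma lrNorm_mono {a b : ι → ℝ} (h : ∀ k, |a k| ≤ |b k|) : lrNorm r a ≤ lrNorm r b := by
  unfold lrNorm
  split
  · exact Finite.ciSup_mono h
  · gcongr (∑ k, ?_ ^ _) ^ _ with k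
    exact h k

lemma lrNorm_abs (a : ι → ℝ) : lrNorm r (fun k => |a k|) = lrNorm r a := by
  simp [lrNorm]

lemma lrNorm_comp_equiv (e : κ ≃ ι) (a : ι → ℝ) : lrNorm r (a ∘ e) = lrNorm r a := by
  unfold lrNorm
  split
  · exact e.iSup_comp (g := fun k => |a k|)
  · exact congrArg (· ^ _) (e.sum_comp fun k => |a k| ^ r.toReal)

lemma lrNorm_of_unique [Unique ι] (hr : r ≠ 0) (a : ι → ℝ) : lrNorm r a = |a default| := by
  unfold lrNorm
  split
  · exact ciSup_unique
  · rename_i hr'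
    rw [Fintype.sum_unique, one_div,
      Real.rpow_rpow_inv (abs_nonneg _) (ENNReal.toReal_pos hr hr').ne']

lemma lrNorm_prod (hr : r ≠ 0) (a : ι × κ → ℝ) :
    lrNorm r a = lrNorm r (fun i => lrNorm r (fun k => a (i, k))) := by
  unfold lrNorm
  split
  · rw [Finite.ciSup_prod (fun p => |a p|)]
    simp_rw [abs_of_nonneg (Real.iSup_nonneg fun k => abs_nonneg (a (_, k)))]
  · rename_i hr'
    rw [Fintype.sum_prod_type]
    congr 1
    refine Finset.sum_congr rfl fun i _ => ?_
    rw [abs_of_nonneg (by positivity), one_div,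
      Real.rpow_inv_rpow (by positivity) (ENNReal.toReal_pos hr hr').ne']

lemma lrNorm_le_sum_abs (hr : 1 ≤ r) (a : ι → ℝ) : lrNorm r a ≤ ∑ k, |a k| := by
  classical
  have := Fact.mk hr
  rw [lrNorm_eq_norm_toLp (zero_lt_one.trans_le hr).ne', ← Finset.univ_sum_single a]
  simp_rw [WithLp.toLp_sum, PiLp.toLp_single]
  exact (norm_sum_le _ _).trans_eq (by simp [PiLp.norm_single])

lemma StrongDual.apply_toLp_eq_sum [DecidableEq ι] (φ : StrongDual ℝ (PiLp r fun _ : ι => ℝ))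
    (v : ι → ℝ) : φ (WithLp.toLp r v) = ∑ k, φ (PiLp.single r k 1) * v k := by
  conv_lhs => rw [← Finset.univ_sum_single v]
  simp_rw [WithLp.toLp_sum, map_sum]
  refine Finset.sum_congr rfl fun k _ => ?_
  have : WithLp.toLp r (Pi.single k (v k)) = v k • PiLp.single r (β := fun _ : ι => ℝ) k 1 := by
    ext j
    simp [Pi.single_apply]
  rw [this, map_smul, smul_eq_mul, mul_comm]

/-- Hahn–Banach in `PiLp r`, restricted to a countable dense part of the dual unit ball:
countability is what allows the duality to be used for almost every point at once. -/
lemma exists_countable_dual_lrNorm (hr : 1 ≤ r) :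
    ∃ D : Set (ι → ℝ), D.Countable ∧ (∀ c ∈ D, ∀ v, |∑ k, c k * v k| ≤ lrNorm r v) ∧
      ∀ v M, (∀ c ∈ D, |∑ k, c k * v k| ≤ M) → lrNorm r v ≤ M := by
  classical
  have := Fact.mk hr
  have hr0 : r ≠ 0 := (zero_lt_one.trans_le hr).ne'
  obtain ⟨S, hSB, hSc, hBS⟩ := (TopologicalSpace.IsSeparable.of_separableSpace
    (Metric.closedBall (0 : StrongDual ℝ (PiLp r fun _ : ι => ℝ)) 1)).exists_countable_dense_subset
  refine ⟨(fun φ k => φ (PiLp.single r k 1)) '' S, hSc.image _, ?_, ?_⟩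
  · rintro _ ⟨φ, hφ, rfl⟩ v
    rw [← StrongDual.apply_toLp_eq_sum, lrNorm_eq_norm_toLp hr0, ← Real.norm_eq_abs]
    exact φ.le_of_opNorm_le (mem_closedBall_zero_iff.mp (hSB hφ)) _ |>.trans_eq (one_mul _)
  · intro v M hM
    obtain ⟨g, hg1, hgv⟩ := exists_dual_vector'' ℝ (WithLp.toLp r v)
    have hclosed :
        IsClosed {φ : StrongDual ℝ (PiLp r fun _ : ι => ℝ) | |φ (WithLp.toLp r v)| ≤ M} :=
      isClosed_le (continuous_abs.comp (continuous_id.clm_apply continuous_const))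
        continuous_const
    have hg : |g (WithLp.toLp r v)| ≤ M :=
      closure_minimal (fun φ hφ => by simpa [StrongDual.apply_toLp_eq_sum] using hM _ ⟨φ, hφ, rfl⟩)
        hclosed (hBS (mem_closedBall_zero_iff.mpr hg1))
    rw [lrNorm_eq_norm_toLp hr0]
    exact (le_abs_self _).trans (by simpa [hgv] using hg)

lemma memLp_lrNorm {α : Type*} [MeasurableSpace α] {μ : Measure α} {q : ℝ≥0∞} (hr : 1 ≤ r)
    {a : ι → α → ℝ} (ha : ∀ k, MemLp (a k) q μ) :
    MemLp (fun x => lrNorm r fun k => a k x) q μ := by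
  have := Fact.mk hr
  have hmeas : AEStronglyMeasurable (fun x => lrNorm r fun k => a k x) μ := by
    simp_rw [lrNorm_eq_norm_toLp (zero_lt_one.trans_le hr).ne']
    exact (PiLp.continuous_toLp r _).norm.comp_aestronglyMeasurable
      (aemeasurable_pi_lambda _ fun k =>
        (ha k).aestronglyMeasurable.aemeasurable).aestronglyMeasurable
  refine (memLp_finsetSum' Finset.univ fun k _ => (ha k).abs).of_le hmeas
    (Filter.Eventually.of_forall fun x => ?_)
  rw [Real.norm_eq_abs, Real.norm_eq_abs, abs_of_nonneg (lrNorm_nonneg _), Finset.sum_apply]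
  exact (lrNorm_le_sum_abs hr _).trans (le_abs_self _)

end lrNorm

lemma memLp_update {m : ℕ} {Ω : Fin m → Type*} [∀ i, MeasurableSpace (Ω i)]
    {μ : ∀ i, Measure (Ω i)} {q : Fin m → ℝ≥0∞} {f : ∀ i, Ω i → ℝ}
    (hf : ∀ j, MemLp (f j) (q j) (μ j)) {i : Fin m} {a : Ω i → ℝ} (ha : MemLp a (q i) (μ i)) :
    ∀ j, MemLp (update f i a j) (q j) (μ j) :=
  (forall_update_iff f fun j b => MemLp b (q j) (μ j)).2 ⟨ha, fun j _ => hf j⟩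

/-- The algebraic part of `IsBddMultilinear` together with positivity: unlike the norm bound, it
survives freezing a slot at a fixed function (`IsPositiveMultilinear.cons`). -/
structure IsPositiveMultilinear {m : ℕ} {Ω : Fin m → Type*} [∀ i, MeasurableSpace (Ω i)]
    (μ : ∀ i, Measure (Ω i)) {Ω' : Type*} [MeasurableSpace Ω'] (ν : Measure Ω')
    (q : Fin m → ℝ≥0∞) (T : (∀ i, Ω i → ℝ) → Ω' → ℝ) : Prop where
  multilinear : ∀ (f : ∀ i, Ω i → ℝ), (∀ j, MemLp (f j) (q j) (μ j)) →
      ∀ (i : Fin m) (c : ℝ) (g h : Ω i → ℝ), MemLp g (q i) (μ i) → MemLp h (q i) (μ i) →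
        T (update f i fun x => c * g x + h x) =ᵐ[ν]
          fun ω => c * T (update f i g) ω + T (update f i h) ω
  nonneg : ∀ f : ∀ i, Ω i → ℝ, (∀ j, MemLp (f j) (q j) (μ j)) → (∀ j x, 0 ≤ f j x) →
      ∀ᵐ ω ∂ν, 0 ≤ T f ω

namespace IsPositiveMultilinear

protected lemma cons {m : ℕ} {Ω : Fin (m + 1) → Type*} [∀ i, MeasurableSpace (Ω i)]
    {μ : ∀ i, Measure (Ω i)} {Ω' : Type*} [MeasurableSpace Ω'] {ν : Measure Ω'}
    {q : Fin (m + 1) → ℝ≥0∞} {T : (∀ i, Ω i → ℝ) → Ω' → ℝ}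
    (hT : IsPositiveMultilinear μ ν q T) {g : Ω 0 → ℝ} (hg : MemLp g (q 0) (μ 0))
    (hg0 : ∀ x, 0 ≤ g x) :
    IsPositiveMultilinear (fun i => μ i.succ) ν (fun i => q i.succ)
      (fun f => T (Fin.cons g f)) where
  multilinear f hf i c a b ha hb := by
    simpa only [Fin.cons_update] using hT.multilinear _ (Fin.cases hg hf) i.succ c a b ha hb
  nonneg f hf hf0 := hT.nonneg _ (Fin.cases hg hf) (Fin.cases hg0 hf0)

variable {m : ℕ} {Ω : Fin m → Type*} [∀ i, MeasurableSpace (Ω i)] {μ : ∀ i, Measure (Ω i)}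
  {Ω' : Type*} [MeasurableSpace Ω'] {ν : Measure Ω'} {q : Fin m → ℝ≥0∞}
  {T : (∀ i, Ω i → ℝ) → Ω' → ℝ} {f g : ∀ i, Ω i → ℝ} {i : Fin m}

section

variable (hT : IsPositiveMultilinear μ ν q T) (hf : ∀ j, MemLp (f j) (q j) (μ j))
include hT hf

lemma update_add {a b : Ω i → ℝ} (ha : MemLp a (q i) (μ i)) (hb : MemLp b (q i) (μ i)) :
    T (update f i fun x => a x + b x) =ᵐ[ν]
      fun ω => T (update f i a) ω + T (update f i b) ω := by
  simpa only [one_mul] using hT.multilinear f hf i 1 a b ha hb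

lemma update_sub {a b : Ω i → ℝ} (ha : MemLp a (q i) (μ i)) (hb : MemLp b (q i) (μ i)) :
    T (update f i fun x => a x - b x) =ᵐ[ν]
      fun ω => T (update f i a) ω - T (update f i b) ω := by
  have h := hT.multilinear f hf i (-1) b a hb ha
  simp only [neg_one_mul, neg_add_eq_sub] at h
  exact h

lemma update_sum {κ : Type*} (s : Finset κ) (c : κ → ℝ) {a : κ → Ω i → ℝ}
    (ha : ∀ k, MemLp (a k) (q i) (μ i)) :
    T (update f i fun x => ∑ k ∈ s, c k * a k x) =ᵐ[ν]
      fun ω => ∑ k ∈ s, c k * T (update f i (a k)) ω := by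
  classical
  induction s using Finset.induction_on with
  | empty =>
    have h := hT.update_add hf (i := i) (a := fun _ => 0) (b := fun _ => 0)
      MemLp.zero MemLp.zero
    simp only [add_zero] at h
    filter_upwards [h] with ω hω
    simp only [Finset.sum_empty]
    linarith
  | insert k s hk ih =>
    simp only [Finset.sum_insert hk]
    filter_upwards [hT.multilinear f hf i (c k) (a k) _ (ha k)
      (memLp_finsetSum s fun k _ => (ha k).const_mul (c k)), ih] with ω h1 h2
    rw [h1, h2]

lemma update_le_update (hf0 : ∀ j ≠ i, ∀ x, 0 ≤ f j x) {a b : Ω i → ℝ}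
    (ha : MemLp a (q i) (μ i)) (hb : MemLp b (q i) (μ i)) (hab : ∀ x, a x ≤ b x) :
    ∀ᵐ ω ∂ν, T (update f i a) ω ≤ T (update f i b) ω := by
  have hdiff : ∀ᵐ ω ∂ν, 0 ≤ T (update f i fun x => b x - a x) ω :=
    hT.nonneg _ (memLp_update hf (hb.sub ha))
    ((forall_update_iff f fun j b => ∀ x, 0 ≤ b x).2 ⟨fun x => sub_nonneg.2 (hab x), hf0⟩)
  filter_upwards [hT.update_sub hf hb ha, hdiff] with ω h1 h2
  linarith

end

lemma abs_le_of_forall_notMem_eq (hT : IsPositiveMultilinear μ ν q T) (s : Finset (Fin m))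
    (hf : ∀ j, MemLp (f j) (q j) (μ j)) (hg : ∀ j, MemLp (g j) (q j) (μ j))
    (hfg : ∀ j x, |f j x| ≤ g j x) (hs : ∀ j ∉ s, f j = g j) :
    ∀ᵐ ω ∂ν, |T f ω| ≤ T g ω := by
  classical
  induction s using Finset.induction_on generalizing f g with
  | empty =>
    obtain rfl : f = g := funext fun j => hs j (Finset.notMem_empty j)
    filter_upwards [hT.nonneg f hf fun j x => (abs_nonneg _).trans (hfg j x)] with ω hω
    rw [abs_of_nonneg hω]
  | insert i s hi ih =>
    have hslot : ∀ a : Ω i → ℝ, MemLp a (q i) (μ i) → (∀ x, 0 ≤ a x) →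
        ∀ᵐ ω ∂ν, |T (update f i a) ω| ≤ T (update g i a) ω := by
      intro a ha ha0
      refine ih (memLp_update hf ha) (memLp_update hg ha)
        ((forall_update_iff f fun j b => ∀ x, |b x| ≤ update g i a j x).2
          ⟨fun x => by simp [abs_of_nonneg (ha0 x)], fun j hj x => by simpa [hj] using hfg j x⟩)
        fun j hj => ?_
      rcases eq_or_ne j i with rfl | hji
      · simp
      · simpa [hji] using hs j (by simp [hji, hj])
    -- `T f = T(…, (f i)⁺, …) - T(…, (f i)⁻, …)`, and in `g` the two parts add up to `|f i| ≤ g i`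
    have hfp := (hf i).pos_part
    have hfn := (hf i).neg_part
    have hsplit := hT.update_sub hf hfp hfn
    simp only [max_zero_sub_max_neg_zero_eq_self, update_eq_self] at hsplit
    have hsum := hT.update_add hg hfp hfn
    simp only [max_zero_add_max_neg_zero_eq_abs_self] at hsum
    have hmono := hT.update_le_update hg (fun j _ x => (abs_nonneg _).trans (hfg j x))
      (a := fun x => |f i x|) (hf i).abs (hg i) (hfg i)
    rw [update_eq_self] at hmono
    filter_upwards [hsplit, hsum, hmono, hslot _ hfp fun x => le_max_right _ _,
      hslot _ hfn fun x => le_max_right _ _] with ω h1 h2 h3 h4 h5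
    rw [h1]
    linarith [abs_sub (T (update f i fun x => max (f i x) 0) ω)
      (T (update f i fun x => max (-f i x) 0) ω)]

lemma abs_le (hT : IsPositiveMultilinear μ ν q T) (hf : ∀ j, MemLp (f j) (q j) (μ j))
    (hg : ∀ j, MemLp (g j) (q j) (μ j)) (hfg : ∀ j x, |f j x| ≤ g j x) :
    ∀ᵐ ω ∂ν, |T f ω| ≤ T g ω :=
  hT.abs_le_of_forall_notMem_eq Finset.univ hf hg hfg fun j hj => absurd (Finset.mem_univ j) hj

lemma lrNorm_update_le (hT : IsPositiveMultilinear μ ν q T) (hf : ∀ j, MemLp (f j) (q j) (μ j))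
    (hf0 : ∀ j ≠ i, ∀ x, 0 ≤ f j x) {r : ℝ≥0∞} (hr : 1 ≤ r) {ι : Type} [Fintype ι]
    {a : ι → Ω i → ℝ} (ha : ∀ k, MemLp (a k) (q i) (μ i)) :
    ∀ᵐ ω ∂ν, lrNorm r (fun k => T (update f i (a k)) ω) ≤
      T (update f i fun x => lrNorm r fun k => a k x) ω := by
  obtain ⟨D, hDc, hD, hDle⟩ := exists_countable_dual_lrNorm (ι := ι) hr
  have hdual : ∀ c ∈ D, ∀ᵐ ω ∂ν, |∑ k, c k * T (update f i (a k)) ω| ≤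
      T (update f i fun x => lrNorm r fun k => a k x) ω := by
    intro c hc
    filter_upwards [hT.update_sum hf Finset.univ c ha,
      hT.abs_le (memLp_update hf (memLp_finsetSum _ fun k _ => (ha k).const_mul (c k)))
        (memLp_update hf (memLp_lrNorm hr ha))
        ((forall_update_iff f fun j b => ∀ x, |b x| ≤ update f i _ j x).2
          ⟨fun x => by simpa using hD c hc fun k => a k x,
            fun j hj x => by simp [hj, abs_of_nonneg (hf0 j hj x)]⟩)] with ω h1 h2
    rwa [← h1]
  filter_upwards [(ae_ball_iff hDc).2 hdual] with ω hω
  exact hDle _ _ hω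

lemma lrNorm_le_of_nonneg (hT : IsPositiveMultilinear μ ν q T) {r : ℝ≥0∞} (hr : 1 ≤ r)
    {ι : Fin m → Type} [∀ i, Fintype (ι i)] {F : ∀ i, ι i → Ω i → ℝ}
    (hF : ∀ i k, MemLp (F i k) (q i) (μ i)) (hF0 : ∀ i k x, 0 ≤ F i k x) :
    ∀ᵐ ω ∂ν, lrNorm r (fun k : ∀ i, ι i => T (fun i => F i (k i)) ω) ≤
      T (fun i x => lrNorm r fun k => F i k x) ω := by
  have hr0 : r ≠ 0 := (zero_lt_one.trans_le hr).ne'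
  induction m with
  | zero =>
    filter_upwards [hT.nonneg _ (fun i => i.elim0) fun i => i.elim0] with ω hω
    rw [lrNorm_of_unique hr0,
      Subsingleton.elim (fun i => F i _) (fun i x => lrNorm r fun k => F i k x), abs_of_nonneg hω]
  | succ m ih =>
    set G₀ : Ω 0 → ℝ := fun x => lrNorm r fun k => F 0 k x
    have hG₀ : MemLp G₀ (q 0) (μ 0) := memLp_lrNorm hr (hF 0)
    have hslot : ∀ᵐ ω ∂ν, ∀ k' : ∀ i : Fin m, ι i.succ,
        lrNorm r (fun k₀ => T (Fin.cons (F 0 k₀) fun i => F i.succ (k' i)) ω) ≤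
          T (Fin.cons G₀ fun i => F i.succ (k' i)) ω := by
      refine ae_all_iff.2 fun k' => ?_
      simpa only [Fin.update_cons_zero] using hT.lrNorm_update_le (i := 0)
        (f := Fin.cons G₀ fun i => F i.succ (k' i)) (Fin.cases hG₀ fun i => hF _ _)
        (fun j _ => Fin.cases (fun x => lrNorm_nonneg _) (fun i => hF0 _ _) j) hr (hF 0)
    filter_upwards [hslot, ih (hT.cons hG₀ fun x => lrNorm_nonneg _) (F := fun i => F i.succ)
      (fun i => hF i.succ) (fun i => hF0 i.succ)] with ω h1 h2
    calc lrNorm r (fun k : ∀ i, ι i => T (fun i => F i (k i)) ω)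
        = lrNorm r (fun kk : (∀ i : Fin m, ι i.succ) × ι 0 =>
            T (Fin.cons (F 0 kk.2) fun i => F i.succ (kk.1 i)) ω) := by
          rw [← lrNorm_comp_equiv ((Equiv.prodComm _ _).trans (Fin.consEquiv ι))]
          refine congrArg _ (funext fun kk => congrArg (T · ω) (funext fun i => ?_))
          cases i using Fin.cases <;> rfl
      _ = lrNorm r (fun k' : ∀ i : Fin m, ι i.succ => lrNorm r fun k₀ =>
            T (Fin.cons (F 0 k₀) fun i => F i.succ (k' i)) ω) := lrNorm_prod hr0 _
      _ ≤ lrNorm r (fun k' : ∀ i : Fin m, ι i.succ =>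
            T (Fin.cons G₀ fun i => F i.succ (k' i)) ω) :=
          lrNorm_mono fun k' => by
            rw [abs_of_nonneg (lrNorm_nonneg _)]
            exact (h1 k').trans (le_abs_self _)
      _ ≤ T (Fin.cons G₀ fun i x => lrNorm r fun k => F i.succ k x) ω := h2
      _ = T (fun i x => lrNorm r fun k => F i k x) ω :=
          congrArg (T · ω) (Fin.cons_self_tail (α := fun i => Ω i → ℝ)
            fun i x => lrNorm r fun k => F i k x)

lemma lrNorm_le (hT : IsPositiveMultilinear μ ν q T) {r : ℝ≥0∞} (hr : 1 ≤ r)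
    {ι : Fin m → Type} [∀ i, Fintype (ι i)] {F : ∀ i, ι i → Ω i → ℝ}
    (hF : ∀ i k, MemLp (F i k) (q i) (μ i)) :
    ∀ᵐ ω ∂ν, lrNorm r (fun k : ∀ i, ι i => T (fun i => F i (k i)) ω) ≤
      T (fun i x => lrNorm r fun k => F i k x) ω := by
  have habs : ∀ᵐ ω ∂ν, ∀ k : ∀ i, ι i,
      |T (fun i => F i (k i)) ω| ≤ T (fun i x => |F i (k i) x|) ω :=
    ae_all_iff.2 fun k => hT.abs_le (fun i => hF i (k i)) (fun i => (hF i (k i)).abs)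
      fun i x => le_rfl
  filter_upwards [habs, hT.lrNorm_le_of_nonneg hr (F := fun i k x => |F i k x|)
    (fun i k => (hF i k).abs) fun i k x => abs_nonneg _] with ω h1 h2
  simp only [lrNorm_abs] at h2
  exact (lrNorm_mono fun k => (h1 k).trans (le_abs_self _)).trans h2

end IsPositiveMultilinear

theorem statement15_general (m : ℕ) (q : Fin m → ℝ≥0∞)
    (p : ℝ≥0∞) (r : ℝ≥0∞) (hr : 1 ≤ r)
    (Ω : Fin m → Type) [∀ i, MeasurableSpace (Ω i)] (μ : ∀ i, Measure (Ω i))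
    (Ω' : Type) [MeasurableSpace Ω'] (ν : Measure Ω')
    (T : (∀ i, Ω i → ℝ) → Ω' → ℝ) (M : ℝ)
    (hT : IsBddMultilinear μ ν q p T M)
    (hpos : ∀ f : ∀ i, Ω i → ℝ, (∀ j, MemLp (f j) (q j) (μ j)) →
      (∀ j, ∀ᵐ x ∂(μ j), 0 ≤ f j x) → ∀ᵐ ω ∂ν, 0 ≤ T f ω)
    (n : Fin m → ℕ) (f : ∀ i, Fin (n i) → Ω i → ℝ)
    (hf : ∀ i kᵢ, MemLp (f i kᵢ) (q i) (μ i)) :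
    MZineq μ ν q p r T M n f := by
  have hT' : IsPositiveMultilinear μ ν q T :=
    ⟨hT.multilinear, fun g hg hg0 => hpos g hg fun j => .of_forall (hg0 j)⟩
  refine (eLpNorm_mono_ae ?_).trans (hT.bound _ fun i => memLp_lrNorm hr (hf i))
  filter_upwards [hT'.lrNorm_le hr hf] with ω hω
  rw [Real.norm_eq_abs, Real.norm_eq_abs, abs_of_nonneg (lrNorm_nonneg _)]
  exact hω.trans (le_abs_self _)

/-- A positive bounded multilinear operator (norm at most `M`) satisfies the
Marcinkiewicz–Zygmund inequality with constant `M` (i.e. `C = 1`) for every `1 ≤ r ≤ ∞`,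
for all exponents `0 < qᵢ, p ≤ ∞`. -/
theorem statement15 (m : ℕ) (hm : 1 ≤ m) (q : Fin m → ℝ≥0∞) (hq : ∀ i, 0 < q i)
    (p : ℝ≥0∞) (hp : 0 < p) (r : ℝ≥0∞) (hr : 1 ≤ r)
    (Ω : Fin m → Type) [∀ i, MeasurableSpace (Ω i)] (μ : ∀ i, Measure (Ω i))
    [∀ i, SigmaFinite (μ i)]
    (Ω' : Type) [MeasurableSpace Ω'] (ν : Measure Ω') [SigmaFinite ν]
    (T : (∀ i, Ω i → ℝ) → Ω' → ℝ) (M : ℝ) (hM : 0 ≤ M)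
    (hT : IsBddMultilinear μ ν q p T M)
    (hpos : ∀ f : ∀ i, Ω i → ℝ, (∀ j, MemLp (f j) (q j) (μ j)) →
      (∀ j, ∀ᵐ x ∂(μ j), 0 ≤ f j x) → ∀ᵐ ω ∂ν, 0 ≤ T f ω)
    (n : Fin m → ℕ) (f : ∀ i, Fin (n i) → Ω i → ℝ)
    (hf : ∀ i kᵢ, MemLp (f i kᵢ) (q i) (μ i)) :
    MZineq μ ν q p r T M n f :=
  statement15_general m q p r hr Ω μ Ω' ν T M hT hpos n f hf
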